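/- arXiv:1208.0401 — 6 statements merged into one kernel-verified Lean document; each statement's English description precedes it below -/
import Mathlib

section
/- Let H(s) = -Σ_{(i,j)} J_{ij} η_i g_j + Σ_i (α_i η_i² + λ_i g_i²) on a finite graph with all J_{ij} > 0, where spins s_i = (η_i, g_i) with η_i ∈ {-1,0,1}, g_i ∈ ℝ, ordered componentwise. If s_a (raising g_a by δg_a > 0) and s_b (raising η_b by 1) are single-coordinate raises of a base configuration s at distinct sites a, b, then H(s_{ab}) + H(s) ≤ H(s_a) + H(s_b), where s_{ab} is the configuration with both raises. -/
open Finset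

lemma upd_eq_add_single {V : Type*} [DecidableEq V] (f : V → ℝ) (a : V) (c : ℝ) :
    Function.update f a (f a + c) = fun i => f i + (if i = a then c else 0) := by
  funext i
  by_cases h : i = a
  · subst h; simp
  · simp [Function.update_of_ne h, h]

lemma S_add_left {V : Type*} [Fintype V] (J : V → V → ℝ) (e e' f : V → ℝ) :
    ∑ i, ∑ j, J i j * (e i + e' i) * f j
      = (∑ i, ∑ j, J i j * e i * f j) + ∑ i, ∑ j, J i j * e' i * f j := by
  rw [← Finset.sum_add_distrib]
  refine Finset.sum_congr rfl fun i _ => ?_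
  rw [← Finset.sum_add_distrib]
  refine Finset.sum_congr rfl fun j _ => ?_
  ring

lemma S_add_right {V : Type*} [Fintype V] (J : V → V → ℝ) (e f f' : V → ℝ) :
    ∑ i, ∑ j, J i j * e i * (f j + f' j)
      = (∑ i, ∑ j, J i j * e i * f j) + ∑ i, ∑ j, J i j * e i * f' j := by
  rw [← Finset.sum_add_distrib]
  refine Finset.sum_congr rfl fun i _ => ?_
  rw [← Finset.sum_add_distrib]
  refine Finset.sum_congr rfl fun j _ => ?_
  ring

lemma S_single_single {V : Type*} [Fintype V] [DecidableEq V] (J : V → V → ℝ)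
    (a b : V) (c d : ℝ) :
    ∑ i, ∑ j, J i j * (if i = b then c else 0) * (if j = a then d else 0) = J b a * c * d := by
  rw [Finset.sum_eq_single b]
  · rw [Finset.sum_eq_single a]
    · simp
    · intro j _ hj; simp [hj]
    · intro h; exact absurd (Finset.mem_univ a) h
  · intro i _ hi; simp [hi]
  · intro h; exact absurd (Finset.mem_univ b) h

/-- FKG lattice inequality for the graffiti Hamiltonian: raising the graffiti field at `a`
and the agent spin at `b` jointly lowers the energy sum:
`H(s_{ab}) + H(s) ≤ H(s_a) + H(s_b)`. -/
theorem stmt_4 {V : Type*} [Fintype V] [DecidableEq V]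
    (J : V → V → ℝ) (hJ : ∀ i j, 0 < J i j) (α lam : V → ℝ)
    (η g : V → ℝ) (hη : ∀ i, η i = -1 ∨ η i = 0 ∨ η i = 1)
    (a b : V) (hab : a ≠ b) (δg : ℝ) (hδg : 0 < δg) :
    (fun (e f : V → ℝ) =>
        -(∑ i, ∑ j, J i j * e i * f j) + ∑ i, (α i * (e i) ^ 2 + lam i * (f i) ^ 2))
        (Function.update η b (η b + 1)) (Function.update g a (g a + δg)) +
      (fun (e f : V → ℝ) =>
        -(∑ i, ∑ j, J i j * e i * f j) + ∑ i, (α i * (e i) ^ 2 + lam i * (f i) ^ 2))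
        η g ≤
    (fun (e f : V → ℝ) =>
        -(∑ i, ∑ j, J i j * e i * f j) + ∑ i, (α i * (e i) ^ 2 + lam i * (f i) ^ 2))
        η (Function.update g a (g a + δg)) +
      (fun (e f : V → ℝ) =>
        -(∑ i, ∑ j, J i j * e i * f j) + ∑ i, (α i * (e i) ^ 2 + lam i * (f i) ^ 2))
        (Function.update η b (η b + 1)) g := by
  simp only
  rw [upd_eq_add_single η b 1, upd_eq_add_single g a δg]
  simp only [S_add_left, S_add_right, S_single_single, Finset.sum_add_distrib]
  have hJba : 0 ≤ J b a * 1 * δg := by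
    have := hJ b a; nlinarith
  linarith
end

section
/- For κ ≥ 0, the ratio (∫_0^∞ e^{-ω²} sinh(κω) ω⁴ dω) / (∫_0^∞ e^{-ω²} sinh(κω) ω³ dω) is bounded above by B(1+κ) for some absolute constant B < ∞. -/
open MeasureTheory Real Set

private lemma sinh_le_half_exp {x : ℝ} : Real.sinh x ≤ Real.exp x / 2 := by
  rw [Real.sinh_eq]
  have := Real.exp_pos (-x)
  linarith

private lemma sinh_le_mul_exp {x : ℝ} (hx : 0 ≤ x) : Real.sinh x ≤ x * Real.exp x := by
  rw [Real.sinh_eq]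
  have h1 : 1 + (-(2*x)) ≤ Real.exp (-(2*x)) := by
    have := Real.add_one_le_exp (-(2*x)); linarith
  have h2 : Real.exp (-x) = Real.exp x * Real.exp (-(2*x)) := by
    rw [← Real.exp_add]; ring_nf
  have h3 : Real.exp x * (1 - 2*x) ≤ Real.exp x * Real.exp (-(2*x)) :=
    mul_le_mul_of_nonneg_left (by linarith) (Real.exp_pos x).le
  rw [h2]
  nlinarith [Real.exp_pos x]

private lemma pow_six_le_exp {x : ℝ} (hx : 0 ≤ x) : x ^ 6 ≤ 46656 * Real.exp x := by
  have h1 : x / 6 + 1 ≤ Real.exp (x / 6) := Real.add_one_le_exp (x / 6)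
  have h2 : (x / 6) ^ 6 ≤ (Real.exp (x / 6)) ^ 6 := by
    apply pow_le_pow_left₀ (by positivity) (by linarith)
  have h3 : (Real.exp (x / 6)) ^ 6 = Real.exp x := by
    rw [← Real.exp_nat_mul]; congr 1; push_cast; ring
  have : (x / 6) ^ 6 = x ^ 6 / 46656 := by ring
  rw [this, h3] at h2
  linarith

private lemma integ_aux {κ : ℝ} (hκ : 0 ≤ κ) (n : ℕ) :
    IntegrableOn (fun ω : ℝ => Real.exp (-ω ^ 2) * Real.sinh (κ * ω) * ω ^ n)
      (Set.Ioi 0) := by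
  have hn : (-1 : ℝ) < (n : ℝ) := lt_of_lt_of_le neg_one_lt_zero (Nat.cast_nonneg n)
  have hg : IntegrableOn
      (fun ω : ℝ => (Real.exp (κ ^ 2 / 2) / 2) * (ω ^ (n : ℝ) * Real.exp (-(1/2) * ω ^ 2)))
      (Set.Ioi 0) :=
    (integrableOn_rpow_mul_exp_neg_mul_sq (by norm_num) hn).const_mul _
  refine hg.mono' ?_ ?_
  · exact (Continuous.aestronglyMeasurable (by fun_prop)).restrict
  · filter_upwards [ae_restrict_mem measurableSet_Ioi] with ω hω
    have hω0 : 0 < ω := hω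
    have hs : 0 ≤ Real.sinh (κ * ω) := Real.sinh_nonneg_iff.2 (by positivity)
    rw [Real.norm_eq_abs, abs_of_nonneg (by positivity)]
    have h1 : Real.sinh (κ * ω) ≤ Real.exp (κ * ω) / 2 := sinh_le_half_exp
    have h2 : Real.exp (-ω ^ 2) * Real.exp (κ * ω) ≤
        Real.exp (κ ^ 2 / 2) * Real.exp (-(1/2) * ω ^ 2) := by
      rw [← Real.exp_add, ← Real.exp_add]
      apply Real.exp_le_exp.2
      nlinarith [sq_nonneg (κ - ω)]
    have hrw : ω ^ (n : ℝ) = ω ^ n := Real.rpow_natCast ω n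
    rw [hrw]
    have hp : (0:ℝ) ≤ ω ^ n := by positivity
    calc Real.exp (-ω ^ 2) * Real.sinh (κ * ω) * ω ^ n
        ≤ Real.exp (-ω ^ 2) * (Real.exp (κ * ω) / 2) * ω ^ n := by
          apply mul_le_mul_of_nonneg_right _ hp
          exact mul_le_mul_of_nonneg_left h1 (Real.exp_pos _).le
      _ ≤ (Real.exp (κ ^ 2 / 2) * Real.exp (-(1/2) * ω ^ 2) / 2) * ω ^ n := by
          apply mul_le_mul_of_nonneg_right _ hp
          linarith
      _ = Real.exp (κ ^ 2 / 2) / 2 * (ω ^ n * Real.exp (-(1/2) * ω ^ 2)) := by ring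

set_option maxHeartbeats 2000000 in
/-- The moment ratio `(∫₀^∞ e^{-ω²} sinh(κω) ω⁴ dω)/(∫₀^∞ e^{-ω²} sinh(κω) ω³ dω)`
is bounded by `B(1+κ)` for an absolute constant `B < ∞`. -/
theorem stmt_7 :
    ∃ B : ℝ, 0 < B ∧ ∀ κ : ℝ, 0 ≤ κ →
      (∫ ω in Set.Ioi (0 : ℝ), Real.exp (-ω ^ 2) * Real.sinh (κ * ω) * ω ^ 4) /
          (∫ ω in Set.Ioi (0 : ℝ), Real.exp (-ω ^ 2) * Real.sinh (κ * ω) * ω ^ 3) ≤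
        B * (1 + κ) := by
  refine ⟨2000000, by norm_num, fun κ hκ => ?_⟩
  rcases eq_or_lt_of_le hκ with h0 | hκpos
  · subst h0
    norm_num
  set f3 : ℝ → ℝ := fun ω => Real.exp (-ω ^ 2) * Real.sinh (κ * ω) * ω ^ 3 with hf3
  set f4 : ℝ → ℝ := fun ω => Real.exp (-ω ^ 2) * Real.sinh (κ * ω) * ω ^ 4 with hf4
  have hi3 : IntegrableOn f3 (Set.Ioi 0) := integ_aux hκ 3
  have hi4 : IntegrableOn f4 (Set.Ioi 0) := integ_aux hκ 4
  set D : ℝ := ∫ ω in Set.Ioi (0 : ℝ), f3 ω with hD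
  set N : ℝ := ∫ ω in Set.Ioi (0 : ℝ), f4 ω with hN
  have hf3nonneg : ∀ ω ∈ Set.Ioi (0:ℝ), 0 ≤ f3 ω := by
    intro ω hω
    have : (0:ℝ) < ω := hω
    have : 0 ≤ Real.sinh (κ * ω) := Real.sinh_nonneg_iff.2 (by positivity)
    simp only [hf3]; positivity
  have hf3nonneg' : 0 ≤ᵐ[volume.restrict (Set.Ioi (0:ℝ))] f3 := by
    filter_upwards [ae_restrict_mem measurableSet_Ioi] with ω hω using hf3nonneg ω hω
  -- Lower bound for D
  have hDlow : Real.exp (-4) * κ ≤ D := by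
    have h1 : ∫ ω in Set.Ioc (1:ℝ) 2, (Real.exp (-4) * κ) ≤ ∫ ω in Set.Ioc (1:ℝ) 2, f3 ω := by
      apply setIntegral_mono_on
      · exact integrableOn_const measure_Ioc_lt_top.ne
      · exact hi3.mono_set (fun x hx => lt_trans one_pos hx.1)
      · exact measurableSet_Ioc
      · intro ω hω
        obtain ⟨hω1, hω2⟩ := hω
        have hω0 : (0:ℝ) < ω := lt_trans one_pos hω1
        have he : Real.exp (-4) ≤ Real.exp (-ω ^ 2) := Real.exp_le_exp.2 (by nlinarith)
        have hs : κ ≤ Real.sinh (κ * ω) := by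
          calc κ ≤ κ * ω := by nlinarith
            _ ≤ Real.sinh (κ * ω) := Real.self_le_sinh_iff.2 (by positivity)
        have hw : (1:ℝ) ≤ ω ^ 3 := by nlinarith
        have hsnn : 0 ≤ Real.sinh (κ * ω) := le_trans hκ hs
        calc Real.exp (-4) * κ ≤ Real.exp (-ω ^ 2) * Real.sinh (κ * ω) := by
              apply mul_le_mul he hs hκ (Real.exp_pos _).le
          _ ≤ Real.exp (-ω ^ 2) * Real.sinh (κ * ω) * ω ^ 3 := by
              nlinarith [mul_nonneg (Real.exp_pos (-ω^2)).le hsnn]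
    have h2 : ∫ ω in Set.Ioc (1:ℝ) 2, f3 ω ≤ D := by
      apply setIntegral_mono_set hi3 hf3nonneg'
      exact HasSubset.Subset.eventuallyLE (fun x hx => lt_trans one_pos hx.1)
    have h3 : ∫ ω in Set.Ioc (1:ℝ) 2, (Real.exp (-4) * κ) = Real.exp (-4) * κ := by
      simp [Real.volume_Ioc]
      norm_num
    linarith
  have hDpos : 0 < D := lt_of_lt_of_le (by positivity) hDlow
  -- Split N at T = κ + 2
  set T : ℝ := κ + 2 with hT
  have hT2 : (2:ℝ) ≤ T := by simp [hT]; linarith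
  have hsplit : N = (∫ ω in Set.Ioc (0:ℝ) T, f4 ω) + ∫ ω in Set.Ioi T, f4 ω := by
    rw [hN, ← setIntegral_union (Set.Ioc_disjoint_Ioi le_rfl) measurableSet_Ioi
      (hi4.mono_set Set.Ioc_subset_Ioi_self)
      (hi4.mono_set (fun x hx => lt_of_le_of_lt (by linarith : (0:ℝ) ≤ T) hx)),
      Set.Ioc_union_Ioi_eq_Ioi (by linarith)]
  -- Part 1: bulk
  have hbulk : (∫ ω in Set.Ioc (0:ℝ) T, f4 ω) ≤ T * D := by
    have h1 : (∫ ω in Set.Ioc (0:ℝ) T, f4 ω) ≤ ∫ ω in Set.Ioc (0:ℝ) T, T * f3 ω := by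
      apply setIntegral_mono_on
      · exact hi4.mono_set Set.Ioc_subset_Ioi_self
      · exact (hi3.mono_set Set.Ioc_subset_Ioi_self).const_mul T
      · exact measurableSet_Ioc
      · intro ω hω
        obtain ⟨hω0, hωT⟩ := hω
        have hs : 0 ≤ Real.sinh (κ * ω) := Real.sinh_nonneg_iff.2 (by positivity)
        have : f4 ω = f3 ω * ω := by simp only [hf3, hf4]; ring
        rw [this]
        have hf3n : 0 ≤ f3 ω := by simp only [hf3]; positivity
        calc f3 ω * ω ≤ f3 ω * T := mul_le_mul_of_nonneg_left hωT hf3n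
          _ = T * f3 ω := mul_comm _ _
    have h2 : (∫ ω in Set.Ioc (0:ℝ) T, T * f3 ω) = T * ∫ ω in Set.Ioc (0:ℝ) T, f3 ω := by
      exact integral_const_mul T _
    have h3 : (∫ ω in Set.Ioc (0:ℝ) T, f3 ω) ≤ D := by
      apply setIntegral_mono_set hi3 hf3nonneg'
      exact HasSubset.Subset.eventuallyLE Set.Ioc_subset_Ioi_self
    calc (∫ ω in Set.Ioc (0:ℝ) T, f4 ω) ≤ T * ∫ ω in Set.Ioc (0:ℝ) T, f3 ω := by rw [← h2]; exact h1
      _ ≤ T * D := mul_le_mul_of_nonneg_left h3 (by linarith)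
  -- Part 2: tail
  have htail : (∫ ω in Set.Ioi T, f4 ω) ≤ 23328 * κ := by
    have hexpint : IntegrableOn (fun ω : ℝ => 23328 * κ * Real.exp (-ω)) (Set.Ioi T) := by
      have := exp_neg_integrableOn_Ioi T (one_pos)
      simp only [neg_mul, one_mul] at this
      exact this.const_mul _
    have h1 : (∫ ω in Set.Ioi T, f4 ω) ≤ ∫ ω in Set.Ioi T, 23328 * κ * Real.exp (-ω) := by
      apply setIntegral_mono_on
      · exact hi4.mono_set (fun x hx => lt_of_le_of_lt (by linarith : (0:ℝ) ≤ T) hx)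
      · exact hexpint
      · exact measurableSet_Ioi
      · intro ω hω
        have hωT : T < ω := hω
        have hω0 : (0:ℝ) < ω := lt_of_lt_of_le (by linarith) hωT.le
        have hs : Real.sinh (κ * ω) ≤ (κ * ω) * Real.exp (κ * ω) :=
          sinh_le_mul_exp (by positivity)
        have hkey : Real.exp (-ω ^ 2) * Real.exp (κ * ω) ≤ Real.exp (-(2 * ω)) := by
          rw [← Real.exp_add]
          apply Real.exp_le_exp.2
          nlinarith [mul_le_mul_of_nonneg_left (show κ + 2 ≤ ω by linarith) hω0.le]
        have hpow : ω ^ 5 * Real.exp (-ω) ≤ 23328 := by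
          have h6 : ω ^ 6 ≤ 46656 * Real.exp ω := pow_six_le_exp hω0.le
          have hωge : (2:ℝ) ≤ ω := by linarith
          have h7 : ω ^ 6 * Real.exp (-ω) ≤ 46656 := by
            calc ω ^ 6 * Real.exp (-ω) ≤ 46656 * Real.exp ω * Real.exp (-ω) :=
                mul_le_mul_of_nonneg_right h6 (Real.exp_pos _).le
              _ = 46656 := by rw [mul_assoc, ← Real.exp_add]; simp
          nlinarith [h7, mul_le_mul_of_nonneg_right hωge
            (by positivity : (0:ℝ) ≤ ω ^ 5 * Real.exp (-ω))]
        have hf4b : f4 ω ≤ κ * (ω ^ 5) * (Real.exp (-ω ^ 2) * Real.exp (κ * ω)) := by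
          simp only [hf4]
          have h := mul_le_mul_of_nonneg_left hs (Real.exp_pos (-ω^2)).le
          nlinarith [pow_pos hω0 4, Real.exp_pos (-ω^2), Real.exp_pos (κ*ω),
            mul_le_mul_of_nonneg_right h (pow_pos hω0 4).le]
        have hexp2 : Real.exp (-(2 * ω)) = Real.exp (-ω) * Real.exp (-ω) := by
          rw [← Real.exp_add]; ring_nf
        calc f4 ω ≤ κ * (ω ^ 5) * (Real.exp (-ω ^ 2) * Real.exp (κ * ω)) := hf4b
          _ ≤ κ * (ω ^ 5) * Real.exp (-(2 * ω)) := by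
              apply mul_le_mul_of_nonneg_left hkey (by positivity)
          _ = κ * (ω ^ 5 * Real.exp (-ω)) * Real.exp (-ω) := by rw [hexp2]; ring
          _ ≤ κ * 23328 * Real.exp (-ω) := by
              apply mul_le_mul_of_nonneg_right _ (Real.exp_pos _).le
              exact mul_le_mul_of_nonneg_left hpow hκ
          _ = 23328 * κ * Real.exp (-ω) := by ring
    have h2 : (∫ ω in Set.Ioi T, 23328 * κ * Real.exp (-ω)) = 23328 * κ * Real.exp (-T) := by
      rw [integral_const_mul, integral_exp_neg_Ioi]
    have h3 : Real.exp (-T) ≤ 1 := Real.exp_le_one_iff.2 (by linarith)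
    calc (∫ ω in Set.Ioi T, f4 ω) ≤ 23328 * κ * Real.exp (-T) := by rw [← h2]; exact h1
      _ ≤ 23328 * κ * 1 := by
          apply mul_le_mul_of_nonneg_left h3 (by positivity)
      _ = 23328 * κ := by ring
  -- Combine
  have hκD : κ ≤ Real.exp 4 * D := by
    have h := mul_le_mul_of_nonneg_left hDlow (Real.exp_pos (4:ℝ)).le
    have he : Real.exp 4 * (Real.exp (-4) * κ) = κ := by
      rw [← mul_assoc, ← Real.exp_add]; norm_num
    rw [he] at h; exact h
  have hexp4 : Real.exp 4 ≤ 62 := by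
    have h1 : Real.exp 1 ≤ 2.7182818286 := Real.exp_one_lt_d9.le
    have h4 : Real.exp 4 = (Real.exp 1) ^ 4 := by
      rw [← Real.exp_nat_mul]; norm_num
    have h2 : Real.exp 1 ^ 4 ≤ 2.7182818286 ^ 4 :=
      pow_le_pow_left₀ (Real.exp_pos 1).le h1 4
    rw [h4]
    nlinarith [h2]
  have hNbound : N ≤ (κ + 2) * D + 23328 * κ := by
    rw [hsplit]; exact add_le_add hbulk htail
  rw [div_le_iff₀ hDpos]
  have h23 : 23328 * κ ≤ 23328 * (Real.exp 4 * D) :=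
    mul_le_mul_of_nonneg_left hκD (by norm_num)
  have h62 : 23328 * (Real.exp 4 * D) ≤ 1446336 * D := by nlinarith [hDpos.le, hexp4]
  have hfin : N ≤ (κ + 2) * D + 1446336 * D := by linarith
  nlinarith [mul_nonneg hκ hDpos.le, hDpos.le, hfin]
end

section
/- Fix b_R ∈ (0,1) and define Φ_μ(b,n) = -(1/2)μn² - α(b_R)b + ((b+n)/2)log((b+n)/2) + ((b-n)/2)log((b-n)/2) + (1-b)log(1-b), where α(b_R) = log(b_R/(2(1-b_R))). If μ' > μ, (b',n') minimizes Φ_{μ'}, and (b,n) minimizes Φ_μ, then (n')² ≥ n². -/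
open Real

/-- Monotonicity of the minimizing imbalance: if `(b',n')` minimizes `Φ_{μ'}` and `(b,n)`
minimizes `Φ_μ` over the physical domain, with `μ' > μ`, then `(n')² ≥ n²`. -/
theorem stmt_12 (bR μ μ' b n b' n' : ℝ) (hbR : 0 < bR) (hbR1 : bR < 1) (hμ : μ < μ')
    (hmem : (b, n) ∈ {p : ℝ × ℝ | 0 < p.1 ∧ p.1 < 1 ∧ |p.2| < p.1})
    (hmem' : (b', n') ∈ {p : ℝ × ℝ | 0 < p.1 ∧ p.1 < 1 ∧ |p.2| < p.1})
    (hmin : IsMinOn (fun p : ℝ × ℝ =>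
        -(1 / 2) * μ * p.2 ^ 2 - Real.log (bR / (2 * (1 - bR))) * p.1 +
          ((p.1 + p.2) / 2) * Real.log ((p.1 + p.2) / 2) +
          ((p.1 - p.2) / 2) * Real.log ((p.1 - p.2) / 2) +
          (1 - p.1) * Real.log (1 - p.1))
      {p : ℝ × ℝ | 0 < p.1 ∧ p.1 < 1 ∧ |p.2| < p.1} (b, n))
    (hmin' : IsMinOn (fun p : ℝ × ℝ =>
        -(1 / 2) * μ' * p.2 ^ 2 - Real.log (bR / (2 * (1 - bR))) * p.1 +
          ((p.1 + p.2) / 2) * Real.log ((p.1 + p.2) / 2) +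
          ((p.1 - p.2) / 2) * Real.log ((p.1 - p.2) / 2) +
          (1 - p.1) * Real.log (1 - p.1))
      {p : ℝ × ℝ | 0 < p.1 ∧ p.1 < 1 ∧ |p.2| < p.1} (b', n')) :
    n ^ 2 ≤ n' ^ 2 := by
  have h1 := hmin hmem'
  have h2 := hmin' hmem
  simp only [Set.mem_setOf_eq] at h1 h2
  nlinarith [h1, h2]
end

section
/- If (b(μ), n(μ)) and (b(μ'), n(μ')) are minimizers of Φ_μ and Φ_{μ'} respectively with μ' > μ and n(μ) > 0, then n(μ') ≠ n(μ); i.e., the positive minimizing imbalance is strictly increasing in μ. -/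
open Real

private lemma one_dim_min_zero (ν b n : ℝ) (hb : 0 < b) (hnb : |n| < b)
    (h : IsLocalMin (fun y : ℝ =>
        -(1 / 2) * ν * y ^ 2 + (((b + y) / 2) * Real.log ((b + y) / 2) +
          ((b - y) / 2) * Real.log ((b - y) / 2))) n) :
    -(1 / 2) * ν * (2 * n) + ((1 / 2 * Real.log ((b + n) / 2) + 1 / 2) +
      (-(1 / 2) * Real.log ((b - n) / 2) + -(1 / 2))) = 0 := by
  have hpos1 : 0 < (b + n) / 2 := by
    have := abs_lt.mp hnb
    linarith [this.1]
  have hpos2 : 0 < (b - n) / 2 := by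
    have := abs_lt.mp hnb
    linarith [this.2]
  have h1 : HasDerivAt (fun y : ℝ => (b + y) / 2) (1 / 2) n := by
    simpa using ((hasDerivAt_id n).const_add b).div_const 2
  have h2 : HasDerivAt (fun y : ℝ => (b - y) / 2) (-(1 / 2)) n := by
    have := ((hasDerivAt_id n).const_sub b).div_const 2
    simpa [neg_div] using this
  have hl1 : HasDerivAt (fun y : ℝ => ((b + y) / 2) * Real.log ((b + y) / 2))
      (1 / 2 * Real.log ((b + n) / 2) + ((b + n) / 2) * (1 / 2 / ((b + n) / 2))) n :=
    h1.mul (h1.log hpos1.ne')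
  have hl2 : HasDerivAt (fun y : ℝ => ((b - y) / 2) * Real.log ((b - y) / 2))
      (-(1 / 2) * Real.log ((b - n) / 2) + ((b - n) / 2) * (-(1 / 2) / ((b - n) / 2))) n :=
    h2.mul (h2.log hpos2.ne')
  have hq : HasDerivAt (fun y : ℝ => -(1 / 2) * ν * y ^ 2) (-(1 / 2) * ν * (2 * n)) n := by
    simpa [mul_comm, mul_assoc, mul_left_comm] using
      ((hasDerivAt_pow 2 n).const_mul (-(1 / 2) * ν))
  have hd : HasDerivAt (fun y : ℝ =>
      -(1 / 2) * ν * y ^ 2 + (((b + y) / 2) * Real.log ((b + y) / 2) +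
        ((b - y) / 2) * Real.log ((b - y) / 2)))
      (-(1 / 2) * ν * (2 * n) +
        ((1 / 2 * Real.log ((b + n) / 2) + ((b + n) / 2) * (1 / 2 / ((b + n) / 2))) +
         (-(1 / 2) * Real.log ((b - n) / 2) + ((b - n) / 2) * (-(1 / 2) / ((b - n) / 2))))) n :=
    hq.add (hl1.add hl2)
  have hbn1 : b + n ≠ 0 := by linarith
  have hbn2 : b - n ≠ 0 := by linarith
  have heq1 : ((b + n) / 2) * (1 / 2 / ((b + n) / 2)) = 1 / 2 := by
    field_simp
  have heq2 : ((b - n) / 2) * (-(1 / 2) / ((b - n) / 2)) = -(1 / 2) := by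
    field_simp
  rw [heq1, heq2] at hd
  exact h.hasDerivAt_eq_zero hd

/-- Strict monotonicity of the positive minimizing imbalance: if `(b,n)` minimizes `Φ_μ`
with `n > 0` and `(b',n')` minimizes `Φ_{μ'}` with `μ' > μ`, then `n' ≠ n`. -/
theorem stmt_14 (bR μ μ' b n b' n' : ℝ) (hbR : 0 < bR) (hbR1 : bR < 1) (hμ : μ < μ')
    (hn : 0 < n)
    (hmem : (b, n) ∈ {p : ℝ × ℝ | 0 < p.1 ∧ p.1 < 1 ∧ |p.2| < p.1})
    (hmem' : (b', n') ∈ {p : ℝ × ℝ | 0 < p.1 ∧ p.1 < 1 ∧ |p.2| < p.1})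
    (hmin : IsMinOn (fun p : ℝ × ℝ =>
        -(1 / 2) * μ * p.2 ^ 2 - Real.log (bR / (2 * (1 - bR))) * p.1 +
          ((p.1 + p.2) / 2) * Real.log ((p.1 + p.2) / 2) +
          ((p.1 - p.2) / 2) * Real.log ((p.1 - p.2) / 2) +
          (1 - p.1) * Real.log (1 - p.1))
      {p : ℝ × ℝ | 0 < p.1 ∧ p.1 < 1 ∧ |p.2| < p.1} (b, n))
    (hmin' : IsMinOn (fun p : ℝ × ℝ =>
        -(1 / 2) * μ' * p.2 ^ 2 - Real.log (bR / (2 * (1 - bR))) * p.1 +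
          ((p.1 + p.2) / 2) * Real.log ((p.1 + p.2) / 2) +
          ((p.1 - p.2) / 2) * Real.log ((p.1 - p.2) / 2) +
          (1 - p.1) * Real.log (1 - p.1))
      {p : ℝ × ℝ | 0 < p.1 ∧ p.1 < 1 ∧ |p.2| < p.1} (b', n')) :
    n' ≠ n := by
  intro hne
  subst hne
  set S : Set (ℝ × ℝ) := {p : ℝ × ℝ | 0 < p.1 ∧ p.1 < 1 ∧ |p.2| < p.1} with hS
  set L : ℝ := Real.log (bR / (2 * (1 - bR))) with hL
  set F : ℝ → ℝ × ℝ → ℝ := fun ν p =>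
    -(1 / 2) * ν * p.2 ^ 2 - L * p.1 +
      ((p.1 + p.2) / 2) * Real.log ((p.1 + p.2) / 2) +
      ((p.1 - p.2) / 2) * Real.log ((p.1 - p.2) / 2) +
      (1 - p.1) * Real.log (1 - p.1) with hF
  -- pointwise relation
  have hrel : ∀ p : ℝ × ℝ, F μ' p = F μ p - (1 / 2) * (μ' - μ) * p.2 ^ 2 := by
    intro p; simp only [hF]; ring
  -- F μ (b,n) ≤ F μ (b',n)
  have hA : F μ (b, n') ≤ F μ (b', n') := hmin hmem'
  -- F μ' (b',n) ≤ F μ' (b,n), i.e. F μ (b',n) ≤ F μ (b,n)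
  have hB : F μ' (b', n') ≤ F μ' (b, n') := hmin' hmem
  rw [hrel (b', n'), hrel (b, n')] at hB
  have hBE : F μ (b', n') ≤ F μ (b, n') := by simpa using hB
  have hEq : F μ (b, n') = F μ (b', n') := le_antisymm hA hBE
  -- (b, n) is a minimizer of F μ' as well
  have hmin2 : IsMinOn (F μ') S (b, n') := by
    intro p hp
    have h1 : F μ' (b', n') ≤ F μ' p := hmin' hp
    have h2 : F μ' (b, n') = F μ' (b', n') := by
      rw [hrel (b, n'), hrel (b', n'), hEq]
    simp only [Set.mem_setOf_eq]
    rw [h2]; exact h1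
  obtain ⟨hb0, hb1, hnb⟩ := hmem
  simp only [hS] at hb0 hb1 hnb
  -- local minima in the n-direction
  have hloc : ∀ (ν : ℝ), IsMinOn (F ν) S (b, n') → IsLocalMin (fun y : ℝ =>
      -(1 / 2) * ν * y ^ 2 + (((b + y) / 2) * Real.log ((b + y) / 2) +
        ((b - y) / 2) * Real.log ((b - y) / 2))) n' := by
    intro ν hm
    have hmem_nhds : Set.Ioo (-b) b ∈ nhds n' := by
      apply Ioo_mem_nhds
      · exact neg_lt_of_abs_lt hnb
      · exact lt_of_abs_lt hnb
    filter_upwards [hmem_nhds] with y hy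
    have hyS : (b, y) ∈ S := ⟨hb0, hb1, abs_lt.mpr ⟨hy.1, hy.2⟩⟩
    have := hm hyS
    simp only [hF, Set.mem_setOf_eq] at this ⊢
    linarith
  have e1 := one_dim_min_zero μ b n' hb0 hnb (hloc μ hmin)
  have e2 := one_dim_min_zero μ' b n' hb0 hnb (hloc μ' hmin2)
  have hμn : μ * n' = μ' * n' := by nlinarith [e1, e2]
  have : μ = μ' := mul_right_cancel₀ hn.ne' hμn
  exact absurd this hμ.ne
end

section
/- Let R ≥ 1/2 and define ℓ(θ) = (1+R)θ/(R + √(1-θ²)) for θ ∈ (0,1]. Then arctanh(θ) > ℓ(θ) for all θ ∈ (0,1). -/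
open Real

noncomputable def fAux (x : ℝ) : ℝ :=
  (1 / 2) * Real.log ((1 + x) / (1 - x)) - 3 * x / (1 + 2 * Real.sqrt (1 - x ^ 2))

lemma fAux_deriv (x : ℝ) (hx0 : -1 < x) (hx1 : x < 1) :
    ∃ d, HasDerivAt fAux d x ∧ (0 < x → 0 < d) := by
  set s := Real.sqrt (1 - x ^ 2) with hs
  have hpos : 0 < 1 - x ^ 2 := by nlinarith
  have hs0 : 0 < s := Real.sqrt_pos.mpr hpos
  have hs2 : s ^ 2 = 1 - x ^ 2 := Real.sq_sqrt hpos.le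
  have h1x : 0 < 1 + x := by linarith
  have h1x' : 0 < 1 - x := by linarith
  have h1 : HasDerivAt (fun x : ℝ => 1 + x) 1 x := (hasDerivAt_id x).const_add 1
  have h2 : HasDerivAt (fun x : ℝ => 1 - x) (-1) x := (hasDerivAt_id x).const_sub 1
  have hq : HasDerivAt (fun x : ℝ => (1 + x) / (1 - x))
      ((1 * (1 - x) - (1 + x) * (-1)) / (1 - x) ^ 2) x := h1.div h2 h1x'.ne'
  have hqpos : 0 < (1 + x) / (1 - x) := div_pos h1x h1x'
  have hlog := (hq.log hqpos.ne').const_mul (1 / 2 : ℝ)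
  have hin : HasDerivAt (fun x : ℝ => 1 - x ^ 2) (-(2 * x ^ 1)) x :=
    (hasDerivAt_pow 2 x).const_sub 1
  have hsq : HasDerivAt (fun x : ℝ => Real.sqrt (1 - x ^ 2))
      (-(2 * x ^ 1) / (2 * s)) x := hin.sqrt hpos.ne'
  have hden : HasDerivAt (fun x : ℝ => 1 + 2 * Real.sqrt (1 - x ^ 2))
      (2 * (-(2 * x ^ 1) / (2 * s))) x := (hsq.const_mul 2).const_add 1
  have hnum : HasDerivAt (fun x : ℝ => 3 * x) 3 x := by
    simpa using (hasDerivAt_id x).const_mul 3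
  have hdenne : (1 : ℝ) + 2 * s ≠ 0 := by positivity
  have hfrac : HasDerivAt (fun x : ℝ => 3 * x / (1 + 2 * Real.sqrt (1 - x ^ 2)))
      ((3 * (1 + 2 * s) - 3 * x * (2 * (-(2 * x ^ 1) / (2 * s)))) / (1 + 2 * s) ^ 2) x :=
    hnum.div hden hdenne
  refine ⟨_, hlog.sub hfrac, fun hxpos => ?_⟩
  -- positivity of the derivative
  have hslt : s < 1 := by
    nlinarith [hs2]
  have e1 : (1 / 2 : ℝ) * ((1 * (1 - x) - (1 + x) * (-1)) / (1 - x) ^ 2 / ((1 + x) / (1 - x)))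
      = 1 / s ^ 2 := by
    rw [show s ^ 2 = (1 - x) * (1 + x) by rw [hs2]; ring]
    field_simp
    ring
  have e2 : (3 * (1 + 2 * s) - 3 * x * (2 * (-(2 * x ^ 1) / (2 * s))))
      = (3 * (1 + 2 * s) * s + 6 * x ^ 2) / s := by
    field_simp
    ring
  rw [e1, e2, div_div, sub_pos, div_lt_div_iff₀ (by positivity) (by positivity)]
  have hxs : x ^ 2 = 1 - s ^ 2 := by linarith
  have h6 : x ^ 2 * s ^ 2 = (1 - s ^ 2) * s ^ 2 := by rw [hxs]
  have h7 : 0 < s * (1 - s) ^ 2 := mul_pos hs0 (pow_pos (by linarith) 2)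
  nlinarith [h6, h7]

lemma fAux_key (x : ℝ) (hx : 0 < x) (hx1 : x < 1) :
    3 * x / (1 + 2 * Real.sqrt (1 - x ^ 2)) < (1 / 2) * Real.log ((1 + x) / (1 - x)) := by
  have hmono : StrictMonoOn fAux (Set.Icc 0 x) := by
    apply strictMonoOn_of_deriv_pos (convex_Icc 0 x)
    · intro y hy
      have hy0 : -1 < y := by linarith [hy.1]
      have hy1 : y < 1 := lt_of_le_of_lt hy.2 hx1
      obtain ⟨d, hd, -⟩ := fAux_deriv y hy0 hy1
      exact hd.continuousAt.continuousWithinAt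
    · intro y hy
      rw [interior_Icc] at hy
      obtain ⟨d, hd, hdpos⟩ := fAux_deriv y (by linarith [hy.1]) (lt_trans hy.2 hx1)
      rw [hd.deriv]
      exact hdpos hy.1
  have h0 : fAux 0 = 0 := by simp [fAux]
  have := hmono (Set.left_mem_Icc.mpr hx.le) (Set.right_mem_Icc.mpr hx.le) hx
  rw [h0] at this
  unfold fAux at this
  linarith

/-- For `R ≥ 1/2` and `θ ∈ (0,1)`: `arctanh θ > (1+R)θ/(R + √(1-θ²))`. -/
theorem stmt_16 (R θ : ℝ) (hR : 1 / 2 ≤ R) (hθ : 0 < θ) (hθ1 : θ < 1) :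
    (1 + R) * θ / (R + Real.sqrt (1 - θ ^ 2)) <
      (1 / 2) * Real.log ((1 + θ) / (1 - θ)) := by
  set s := Real.sqrt (1 - θ ^ 2) with hs
  have hpos : 0 < 1 - θ ^ 2 := by nlinarith
  have hs0 : 0 < s := Real.sqrt_pos.mpr hpos
  have hs1 : s ≤ 1 := Real.sqrt_le_one.mpr (by nlinarith)
  have hd1 : 0 < R + s := by linarith
  have hd2 : (0 : ℝ) < 1 + 2 * s := by linarith
  have hstep : (1 + R) * θ / (R + s) ≤ 3 * θ / (1 + 2 * s) := by
    rw [div_le_div_iff₀ hd1 hd2]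
    nlinarith [mul_nonneg (mul_nonneg (by linarith : (0:ℝ) ≤ 2*R - 1)
      (by linarith : (0:ℝ) ≤ 1 - s)) hθ.le]
  exact lt_of_le_of_lt hstep (fAux_key θ hθ hθ1)
end

section
/- Fix b_R ∈ (0,1) and suppose there exist n⋆ > 0 and b⋆ ∈ (0,1) with Φ_{μ_S}(b⋆, n⋆) < Φ_{μ_S}(b_R, 0), where μ_S = 1/b_R. Then there exists δμ > 0 such that for all 0 < δ ≤ δμ, min Φ_{μ_S - δ} < Φ_{μ_S - δ}(b_R, 0); hence the transition value μ_T satisfies μ_T < μ_S. -/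
open Real

/-- If at `μ_S = 1/b_R` there is a symmetry-broken point `(b⋆, n⋆)` with strictly lower
free energy than `(b_R, 0)`, then the same holds for all `μ = μ_S - δ` with `δ > 0`
small enough; hence the transition value `μ_T` is strictly below `μ_S`. -/
theorem stmt_18 (bR bstar nstar : ℝ) (hbR : 0 < bR) (hbR1 : bR < 1)
    (hn : 0 < nstar) (hb : 0 < bstar) (hb1 : bstar < 1)
    (hgap :
      (fun (μ : ℝ) (p : ℝ × ℝ) =>
          -(1 / 2) * μ * p.2 ^ 2 - Real.log (bR / (2 * (1 - bR))) * p.1 +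
            ((p.1 + p.2) / 2) * Real.log ((p.1 + p.2) / 2) +
            ((p.1 - p.2) / 2) * Real.log ((p.1 - p.2) / 2) +
            (1 - p.1) * Real.log (1 - p.1))
        (1 / bR) (bstar, nstar) <
      (fun (μ : ℝ) (p : ℝ × ℝ) =>
          -(1 / 2) * μ * p.2 ^ 2 - Real.log (bR / (2 * (1 - bR))) * p.1 +
            ((p.1 + p.2) / 2) * Real.log ((p.1 + p.2) / 2) +
            ((p.1 - p.2) / 2) * Real.log ((p.1 - p.2) / 2) +
            (1 - p.1) * Real.log (1 - p.1))
        (1 / bR) (bR, 0)) :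
    ∃ δμ : ℝ, 0 < δμ ∧ ∀ δ : ℝ, 0 < δ → δ ≤ δμ →
      ∃ bt nt : ℝ, nt ≠ 0 ∧
        (fun (μ : ℝ) (p : ℝ × ℝ) =>
            -(1 / 2) * μ * p.2 ^ 2 - Real.log (bR / (2 * (1 - bR))) * p.1 +
              ((p.1 + p.2) / 2) * Real.log ((p.1 + p.2) / 2) +
              ((p.1 - p.2) / 2) * Real.log ((p.1 - p.2) / 2) +
              (1 - p.1) * Real.log (1 - p.1))
          (1 / bR - δ) (bt, nt) <
        (fun (μ : ℝ) (p : ℝ × ℝ) =>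
            -(1 / 2) * μ * p.2 ^ 2 - Real.log (bR / (2 * (1 - bR))) * p.1 +
              ((p.1 + p.2) / 2) * Real.log ((p.1 + p.2) / 2) +
              ((p.1 - p.2) / 2) * Real.log ((p.1 - p.2) / 2) +
              (1 - p.1) * Real.log (1 - p.1))
          (1 / bR - δ) (bR, 0) := by
  simp only at hgap ⊢
  set A := Real.log (bR / (2 * (1 - bR))) with hA
  set L : ℝ := -(1 / 2) * (1 / bR) * nstar ^ 2 - A * bstar +
      ((bstar + nstar) / 2) * Real.log ((bstar + nstar) / 2) +
      ((bstar - nstar) / 2) * Real.log ((bstar - nstar) / 2) +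
      (1 - bstar) * Real.log (1 - bstar) with hL
  set R : ℝ := -(1 / 2) * (1 / bR) * (0:ℝ) ^ 2 - A * bR +
      ((bR + 0) / 2) * Real.log ((bR + 0) / 2) +
      ((bR - 0) / 2) * Real.log ((bR - 0) / 2) +
      (1 - bR) * Real.log (1 - bR) with hR
  have hgap' : L < R := hgap
  have hgpos : 0 < R - L := by linarith
  refine ⟨(R - L) / nstar ^ 2, div_pos hgpos (by positivity), fun δ hδ hδle => ⟨bstar, nstar, hn.ne', ?_⟩⟩
  have h1 : δ * nstar ^ 2 ≤ R - L := by
    have := mul_le_mul_of_nonneg_right hδle (le_of_lt (by positivity : (0:ℝ) < nstar ^ 2))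
    rwa [div_mul_cancel₀] at this
    positivity
  have h2 : 0 < δ * nstar ^ 2 := mul_pos hδ (pow_pos hn 2)
  have e1 : -(1 / 2) * (1 / bR - δ) * nstar ^ 2 - A * bstar +
      ((bstar + nstar) / 2) * Real.log ((bstar + nstar) / 2) +
      ((bstar - nstar) / 2) * Real.log ((bstar - nstar) / 2) +
      (1 - bstar) * Real.log (1 - bstar) = L + (1 / 2) * (δ * nstar ^ 2) := by
    rw [hL]; ring
  have e2 : -(1 / 2) * (1 / bR - δ) * (0:ℝ) ^ 2 - A * bR +
      ((bR + 0) / 2) * Real.log ((bR + 0) / 2) +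
      ((bR - 0) / 2) * Real.log ((bR - 0) / 2) +
      (1 - bR) * Real.log (1 - bR) = R := by
    rw [hR]; ring
  show -(1 / 2) * (1 / bR - δ) * nstar ^ 2 - A * bstar +
      ((bstar + nstar) / 2) * Real.log ((bstar + nstar) / 2) +
      ((bstar - nstar) / 2) * Real.log ((bstar - nstar) / 2) +
      (1 - bstar) * Real.log (1 - bstar) <
    -(1 / 2) * (1 / bR - δ) * (0:ℝ) ^ 2 - A * bR +
      ((bR + 0) / 2) * Real.log ((bR + 0) / 2) +
      ((bR - 0) / 2) * Real.log ((bR - 0) / 2) +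
      (1 - bR) * Real.log (1 - bR)
  rw [e1, e2]
  clear_value A L R
  linarith
end
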